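/- arXiv:1603.00580 — 3 statements merged into one kernel-verified Lean document; each statement's English description precedes it below -/
import Mathlib

section
/- Every vertex of a minimum red-blue-purple spanning graph has degree at most 18. -/
open scoped Classical

noncomputable section

/-- The Euclidean plane. -/
abbrev Pt : Type := EuclideanSpace ℝ (Fin 2)

/-- The simple graph on the plane whose edge set is the finite set `E`. -/
def graphOf (E : Finset (Sym2 Pt)) : SimpleGraph Pt where
  Adj x y := x ≠ y ∧ s(x, y) ∈ E
  symm := ⟨fun x y ⟨hne, he⟩ => ⟨hne.symm, by rwa [Sym2.eq_swap]⟩⟩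
  loopless := ⟨fun x ⟨hne, _⟩ => hne rfl⟩

/-- Euclidean length of an edge. -/
def edgeLen (e : Sym2 Pt) : ℝ :=
  Sym2.lift ⟨fun x y => dist x y, fun _ _ => dist_comm _ _⟩ e

/-- Total Euclidean length of a finite edge set. -/
def weight (E : Finset (Sym2 Pt)) : ℝ := ∑ e ∈ E, edgeLen e

/-- `E` is the edge set of a red-blue-purple spanning graph of `(R, B, P)`. -/
def IsRBP (R B P : Finset Pt) (E : Finset (Sym2 Pt)) : Prop :=
  (∀ e ∈ E, ¬ e.IsDiag) ∧
  (∀ e ∈ E, ∀ x ∈ e, x ∈ R ∪ B ∪ P) ∧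
  ((graphOf E).induce (↑(R ∪ P) : Set Pt)).Connected ∧
  ((graphOf E).induce (↑(B ∪ P) : Set Pt)).Connected

/-- `E` is the edge set of a minimum red-blue-purple spanning graph of `(R, B, P)`. -/
def IsMinRBP (R B P : Finset Pt) (E : Finset (Sym2 Pt)) : Prop :=
  IsRBP R B P E ∧ ∀ E', IsRBP R B P E' → weight E ≤ weight E'

/-! If `x` had seven neighbours that agree on membership in `R ∪ P` and in `B ∪ P`, then by
pigeonhole on their arguments two of them, `y` and `z`, would span an angle `< π / 3` at `x`, so
`|yz| < |xz|` after naming them suitably. Trading the edge `xz` for `yz` shortens the graph and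
keeps both `R ∪ P` and `B ∪ P` connected, as a path through `xz` can detour along `x y z`. Every
point lies in `R ∪ P` or `B ∪ P`, so the neighbours of `x` fall into three such classes. -/

open Finset EuclideanGeometry Real

theorem EuclideanGeometry.dist_lt_max_of_angle_lt_pi_div_three {V P : Type*}
    [NormedAddCommGroup V] [InnerProductSpace ℝ V] [MetricSpace P] [NormedAddTorsor V P]
    {p₁ p₂ p₃ : P} (h₁ : p₁ ≠ p₂) (h₃ : p₃ ≠ p₂) (h : ∠ p₁ p₂ p₃ < π / 3) :
    dist p₁ p₃ < max (dist p₁ p₂) (dist p₃ p₂) := by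
  have ha : 0 < dist p₁ p₂ := dist_pos.mpr h₁
  have hb : 0 < dist p₃ p₂ := dist_pos.mpr h₃
  have hcos : 1 / 2 < cos (∠ p₁ p₂ p₃) := by
    rw [← cos_pi_div_three]
    exact cos_lt_cos_of_nonneg_of_le_pi_div_two (angle_nonneg _ _ _) (by linarith [pi_pos]) h
  have hsq : dist p₁ p₃ ^ 2 < max (dist p₁ p₂) (dist p₃ p₂) ^ 2 := by
    have := law_cos p₁ p₂ p₃
    rcases le_total (dist p₁ p₂) (dist p₃ p₂) with hle | hle
    · rw [max_eq_right hle]; nlinarith [mul_pos ha hb, mul_le_mul_of_nonneg_right hle hb.le]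
    · rw [max_eq_left hle]; nlinarith [mul_pos ha hb, mul_le_mul_of_nonneg_left hle ha.le]
  exact lt_of_pow_lt_pow_left₀ 2 (by positivity) hsq

namespace Complex

theorem angle_eq_abs_arg_sub {x y : ℂ} (hx : x ≠ 0) (hy : y ≠ 0) (h : |arg x - arg y| < π) :
    InnerProductGeometry.angle x y = |arg x - arg y| := by
  rw [angle_eq_abs_arg hx hy, ← arg_coe_angle_toReal_eq_arg, arg_div_coe_angle hx hy,
    ← Real.Angle.coe_sub, Real.Angle.toReal_coe_eq_self_iff.mpr]
  constructor <;> linarith [abs_lt.mp h]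

theorem exists_abs_arg_sub_lt_of_seven_le_card (T : Finset ℂ) (hT : 7 ≤ #T) :
    ∃ w ∈ T, ∃ v ∈ T, w ≠ v ∧ |arg w - arg v| < π / 3 := by
  let sector : ℂ → ℤ := fun w => ⌊(π - arg w) / (π / 3)⌋
  have hmaps : ∀ w ∈ T, sector w ∈ Ico (0 : ℤ) 6 := by
    intro w _
    have h₁ := neg_pi_lt_arg w
    have h₂ := arg_le_pi w
    rw [mem_Ico, Int.floor_nonneg, Int.floor_lt, le_div_iff₀ (by positivity),
      div_lt_iff₀ (by positivity)]
    constructor <;> push_cast <;> linarith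
  obtain ⟨w, hw, v, hv, hne, heq⟩ := exists_ne_map_eq_of_card_lt_of_maps_to
    (by simp only [Int.card_Ico]; omega) hmaps
  refine ⟨w, hw, v, hv, hne, ?_⟩
  have := Int.abs_sub_lt_one_of_floor_eq_floor heq
  rw [← sub_div, abs_div, abs_of_pos (by positivity : (0:ℝ) < π / 3), div_lt_one (by positivity),
    abs_sub_comm] at this
  rwa [sub_sub_sub_cancel_left] at this

theorem exists_dist_lt_of_seven_le_card (c : ℂ) (T : Finset ℂ) (hc : c ∉ T) (hT : 7 ≤ #T) :
    ∃ y ∈ T, ∃ z ∈ T, y ≠ z ∧ dist y z < dist c z := by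
  obtain ⟨w, hw, v, hv, hne, harg⟩ :=
    exists_abs_arg_sub_lt_of_seven_le_card (T.image (· - c))
      (by rwa [card_image_of_injective _ (sub_left_injective)])
  obtain ⟨y, hy, rfl⟩ := mem_image.mp hw
  obtain ⟨z, hz, rfl⟩ := mem_image.mp hv
  have hyc : y ≠ c := fun h => hc (h ▸ hy)
  have hzc : z ≠ c := fun h => hc (h ▸ hz)
  have hangle : ∠ y c z < π / 3 := by
    rw [EuclideanGeometry.angle, vsub_eq_sub, vsub_eq_sub,
      angle_eq_abs_arg_sub (sub_ne_zero.mpr hyc) (sub_ne_zero.mpr hzc) (by linarith [pi_pos])]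
    exact harg
  have hlt := dist_lt_max_of_angle_lt_pi_div_three hyc hzc hangle
  rcases le_total (dist y c) (dist z c) with hle | hle
  · exact ⟨y, hy, z, hz, fun h => hne (h ▸ rfl), by rwa [max_eq_right hle, dist_comm z] at hlt⟩
  · exact ⟨z, hz, y, hy, fun h => hne (h ▸ rfl),
      by rwa [max_eq_left hle, dist_comm y, dist_comm y] at hlt⟩

end Complex

theorem exists_dist_lt_of_seven_le_card (c : Pt) (T : Finset Pt) (hc : c ∉ T) (hT : 7 ≤ #T) :
    ∃ y ∈ T, ∃ z ∈ T, y ≠ z ∧ dist y z < dist c z := by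
  let e := Complex.orthonormalBasisOneI.repr
  obtain ⟨y', hy', z', hz', hyz, hlt⟩ := Complex.exists_dist_lt_of_seven_le_card (e.symm c)
    (T.image e.symm) (by simpa using hc)
    (by rwa [card_image_of_injective _ e.symm.injective])
  obtain ⟨y, hy, rfl⟩ := mem_image.mp hy'
  obtain ⟨z, hz, rfl⟩ := mem_image.mp hz'
  exact ⟨y, hy, z, hz, fun h => hyz (h ▸ rfl),
    by simpa only [LinearIsometryEquiv.dist_map] using hlt⟩

theorem SimpleGraph.Connected.of_adj_reachable {V : Type*} {G G' : SimpleGraph V}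
    (hG : G.Connected) (h : ∀ ⦃u v⦄, G.Adj u v → G'.Reachable u v) : G'.Connected := by
  refine (SimpleGraph.connected_iff _).mpr ⟨fun u v => ?_, hG.nonempty⟩
  have huv := hG u v
  simp only [SimpleGraph.reachable_iff_reflTransGen] at h huv ⊢
  exact Relation.reflTransGen_closed h _ _ huv

lemma edgeLen_mk (a b : Pt) : edgeLen s(a, b) = dist a b := rfl

lemma edgeLen_nonneg (e : Sym2 Pt) : 0 ≤ edgeLen e := by
  induction e using Sym2.ind with
  | _ a b => exact dist_nonneg (x := a)

lemma weight_insert_le (e : Sym2 Pt) (E : Finset (Sym2 Pt)) :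
    weight (insert e E) ≤ edgeLen e + weight E := by
  by_cases he : e ∈ E
  · rw [insert_eq_of_mem he]
    linarith [edgeLen_nonneg e]
  · exact (sum_insert he).le

abbrev swapEdge (E : Finset (Sym2 Pt)) (x y z : Pt) : Finset (Sym2 Pt) :=
  insert s(y, z) (E.erase s(x, z))

lemma weight_swapEdge_lt {E : Finset (Sym2 Pt)} {x y z : Pt} (hxz : s(x, z) ∈ E)
    (h : dist y z < dist x z) : weight (swapEdge E x y z) < weight E := by
  have herase : weight (E.erase s(x, z)) + dist x z = weight E := sum_erase_add E _ hxz
  linarith [weight_insert_le s(y, z) (E.erase s(x, z)), edgeLen_mk y z]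

lemma connected_induce_swapEdge {E : Finset (Sym2 Pt)} {V : Set Pt} {x y z : Pt}
    (hxy : (graphOf E).Adj x y) (hyz : y ≠ z) (hV : x ∈ V → z ∈ V → y ∈ V)
    (hconn : ((graphOf E).induce V).Connected) :
    ((graphOf (swapEdge E x y z)).induce V).Connected := by
  set G := (graphOf (swapEdge E x y z)).induce V
  have hxz : ∀ (hx : x ∈ V) (hz : z ∈ V), G.Reachable ⟨x, hx⟩ ⟨z, hz⟩ := by
    intro hx hz
    have hxy' : G.Adj ⟨x, hx⟩ ⟨y, hV hx hz⟩ :=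
      ⟨hxy.1, mem_insert_of_mem
        (mem_erase.mpr ⟨fun h => hyz (Sym2.congr_right.mp h), hxy.2⟩)⟩
    have hyz' : G.Adj ⟨y, hV hx hz⟩ ⟨z, hz⟩ := ⟨hyz, mem_insert_self _ _⟩
    exact hxy'.reachable.trans hyz'.reachable
  refine hconn.of_adj_reachable fun ⟨a, ha⟩ ⟨b, hb⟩ ⟨hab, habE⟩ => ?_
  by_cases h : s(a, b) = s(x, z)
  · rcases Sym2.eq_iff.mp h with ⟨rfl, rfl⟩ | ⟨rfl, rfl⟩
    · exact hxz ha hb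
    · exact (hxz hb ha).symm
  · exact SimpleGraph.Adj.reachable
      ⟨hab, mem_insert_of_mem (mem_erase.mpr ⟨h, habE⟩)⟩

section

variable {R B P : Finset Pt} {E : Finset (Sym2 Pt)}

lemma IsRBP.swapEdge {x y z : Pt} (h : IsRBP R B P E) (hxy : (graphOf E).Adj x y)
    (hxz : (graphOf E).Adj x z) (hyz : y ≠ z) (hRP : z ∈ R ∪ P → y ∈ R ∪ P)
    (hBP : z ∈ B ∪ P → y ∈ B ∪ P) : IsRBP R B P (swapEdge E x y z) := by
  obtain ⟨hdiag, hmem, hconnRP, hconnBP⟩ := h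
  refine ⟨?_, ?_, connected_induce_swapEdge hxy hyz (fun _ => hRP) hconnRP,
    connected_induce_swapEdge hxy hyz (fun _ => hBP) hconnBP⟩
  · simp only [mem_insert, forall_eq_or_imp, Sym2.mk_isDiag_iff]
    exact ⟨hyz, fun e he => hdiag e (mem_of_mem_erase he)⟩
  · simp only [mem_insert, forall_eq_or_imp, Sym2.mem_iff, forall_eq_or_imp, forall_eq]
    exact ⟨⟨hmem _ hxy.2 y (Sym2.mem_mk_right x y), hmem _ hxz.2 z (Sym2.mem_mk_right x z)⟩,
      fun e he => hmem e (mem_of_mem_erase he)⟩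

lemma IsRBP.card_filter_mem_le (h : IsRBP R B P E) (x : Pt) :
    #(E.filter (x ∈ ·)) ≤ #((R ∪ B ∪ P).filter ((graphOf E).Adj x)) := by
  have hsub : E.filter (x ∈ ·) ⊆ ((R ∪ B ∪ P).filter ((graphOf E).Adj x)).image (s(x, ·)) := by
    intro e he
    obtain ⟨heE, hxe⟩ := mem_filter.mp he
    obtain ⟨w, rfl⟩ := Sym2.mem_iff_exists.mp hxe
    exact mem_image.mpr ⟨w, mem_filter.mpr ⟨h.2.1 _ heE w (Sym2.mem_mk_right x w),
      fun hxw => h.1 _ heE (Sym2.mk_isDiag_iff.mpr hxw), heE⟩, rfl⟩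
  exact (card_le_card hsub).trans card_image_le

lemma IsMinRBP.card_filter_adj_le_six (hE : IsMinRBP R B P E) (x : Pt) {K : Finset Pt}
    (hK : ∀ y ∈ K, ∀ z ∈ K, (y ∈ R ∪ P ↔ z ∈ R ∪ P) ∧ (y ∈ B ∪ P ↔ z ∈ B ∪ P)) :
    #(K.filter ((graphOf E).Adj x)) ≤ 6 := by
  by_contra! hcard
  obtain ⟨y, hy, z, hz, hyz, hlt⟩ := exists_dist_lt_of_seven_le_card x _
    (by simp) hcard
  rw [mem_filter] at hy hz
  have hsame := hK y hy.1 z hz.1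
  have hmin := hE.2 _ (hE.1.swapEdge hy.2 hz.2 hyz hsame.1.2 hsame.2.2)
  linarith [weight_swapEdge_lt hz.2.2 hlt]

end

theorem minRBP_degree_le_18_general (R B P : Finset Pt)
    (E : Finset (Sym2 Pt)) (hE : IsMinRBP R B P E) :
    ∀ x : Pt, (E.filter (fun e => x ∈ e)).card ≤ 18 := by
  intro x
  let layers (w : Pt) : Bool × Bool := (decide (w ∈ R ∪ P), decide (w ∈ B ∪ P))
  have hmaps : ∀ w ∈ (R ∪ B ∪ P).filter ((graphOf E).Adj x),
      layers w ∈ ({(true, false), (false, true), (true, true)} : Finset (Bool × Bool)) := by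
    intro w hw
    simp only [mem_filter, mem_union] at hw
    rcases hw.1 with (hw | hw) | hw <;> simp [layers, hw, or_iff_not_imp_left]
  calc (E.filter (fun e => x ∈ e)).card
      ≤ #((R ∪ B ∪ P).filter ((graphOf E).Adj x)) := hE.1.card_filter_mem_le x
    _ ≤ 6 * 3 := by
      refine card_le_mul_card_image_of_maps_to hmaps 6 fun t _ => ?_
      rw [filter_comm]
      refine hE.card_filter_adj_le_six x fun y hy z hz => ?_
      simp only [mem_filter, layers] at hy hz
      simpa only [layers, Prod.mk.injEq, decide_eq_decide] using hy.2.trans hz.2.symm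

/-- Every vertex of a minimum red-blue-purple spanning graph has
degree at most 18. -/
theorem minRBP_degree_le_18 (R B P : Finset Pt)
    (hRB : Disjoint R B) (hRP : Disjoint R P) (hBP : Disjoint B P)
    (E : Finset (Sym2 Pt)) (hE : IsMinRBP R B P E) :
    ∀ x : Pt, (E.filter (fun e => x ∈ e)).card ≤ 18 :=
  minRBP_degree_le_18_general R B P E hE
end
end

section
/- In a minimum red-blue-purple spanning graph, the subgraph induced by the red and purple points (R ∪ P) is a tree (i.e., it is connected and contains no cycle), and likewise the subgraph induced by the blue and purple points (B ∪ P) is a tree. -/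
open scoped Classical

/-! Suppose the red-purple part of a minimum RBP graph contains a cycle. We delete one of its
edges and show the graph stays RBP, which contradicts minimality because every edge has positive
length. If the whole cycle is purple, any of its edges lies on a cycle of both induced graphs, so
it is a bridge of neither. Otherwise the cycle has a red vertex, which is not blue: an edge of the
cycle at that vertex is no edge of the blue-purple graph, and it is not a bridge of the red-purple
graph. The blue-purple part is symmetric. -/

noncomputable section

namespace SimpleGraph

variable {V : Type*} {G : SimpleGraph V} {s : Set V}

lemma induce_deleteEdges_singleton {a b : V} (ha : a ∈ s) (hb : b ∈ s) :
    (G.deleteEdges {s(a, b)}).induce s = (G.induce s).deleteEdges {s(⟨a, ha⟩, ⟨b, hb⟩)} := by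
  ext x y
  simp [Subtype.ext_iff]

lemma induce_deleteEdges_singleton_of_notMem {e : Sym2 V} {x : V} (hx : x ∈ e) (hxs : x ∉ s) :
    (G.deleteEdges {e}).induce s = G.induce s := by
  ext u v
  simp only [comap_adj, Function.Embedding.subtype_apply, deleteEdges_adj, Set.mem_singleton_iff,
    and_iff_left_iff_imp]
  rintro - rfl
  rcases Sym2.mem_iff.mp hx with rfl | rfl
  exacts [hxs u.2, hxs v.2]

lemma Walk.IsCycle.induce {u : V} {c : G.Walk u u} (hc : c.IsCycle)
    (hcs : ∀ x ∈ c.support, x ∈ s) : (c.induce s hcs).IsCycle :=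
  (Walk.isCycle_map_iff_of_injective (Embedding.induce (G := G) s).injective).mp
    ((c.map_induce hcs).symm ▸ hc)

lemma Walk.mem_edges_induce {u v a b : V} {c : G.Walk u v} (hcs : ∀ x ∈ c.support, x ∈ s)
    (ha : a ∈ s) (hb : b ∈ s) (he : s(a, b) ∈ c.edges) :
    s(⟨a, ha⟩, ⟨b, hb⟩) ∈ (c.induce s hcs).edges := by
  have hedges : (c.induce s hcs).edges.map (Sym2.map Subtype.val) = c.edges :=
    (Walk.edges_map _ _).symm.trans (congrArg Walk.edges (c.map_induce hcs))
  rw [← hedges, List.mem_map] at he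
  obtain ⟨e', he', hval⟩ := he
  convert he'
  exact Sym2.map.injective Subtype.val_injective hval.symm

lemma Connected.induce_deleteEdges_of_mem_edges_isCycle (hG : (G.induce s).Connected) {u : V}
    {c : G.Walk u u} (hc : c.IsCycle) (hcs : ∀ x ∈ c.support, x ∈ s) {e : Sym2 V}
    (he : e ∈ c.edges) : ((G.deleteEdges {e}).induce s).Connected := by
  induction e using Sym2.ind with | _ a b =>
  have ha := hcs a (c.fst_mem_support_of_mem_edges he)
  have hb := hcs b (c.snd_mem_support_of_mem_edges he)
  rw [induce_deleteEdges_singleton ha hb]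
  exact hG.connected_delete_edge_of_not_isBridge fun hbr =>
    hbr.notMem_edges_of_isCycle (hc.induce hcs) (Walk.mem_edges_induce hcs ha hb he)

end SimpleGraph

open SimpleGraph

lemma mem_of_mem_edgeSet_graphOf {E : Finset (Sym2 Pt)} {e : Sym2 Pt}
    (he : e ∈ (graphOf E).edgeSet) : e ∈ E := by
  induction e using Sym2.ind with | _ x y => exact he.2

lemma graphOf_erase (E : Finset (Sym2 Pt)) (e : Sym2 Pt) :
    graphOf (E.erase e) = (graphOf E).deleteEdges {e} := by
  ext x y
  simp only [graphOf, deleteEdges_adj, Finset.mem_erase, Set.mem_singleton_iff]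
  tauto

lemma weight_erase_lt {E : Finset (Sym2 Pt)} {e : Sym2 Pt} (he : e ∈ E) (hd : ¬ e.IsDiag) :
    weight (E.erase e) < weight E := by
  have hlen : 0 < edgeLen e := by
    induction e using Sym2.ind with | _ x y => exact dist_pos.mpr hd
  rw [weight, weight, ← Finset.sum_erase_add E edgeLen he]
  linarith

variable {R B P : Finset Pt} {E : Finset (Sym2 Pt)}

lemma IsRBP.swap (hE : IsRBP R B P E) : IsRBP B R P E := by
  obtain ⟨hdiag, hmem, hRP, hBP⟩ := hE
  refine ⟨hdiag, fun e he x hx => ?_, hBP, hRP⟩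
  have := hmem e he x hx
  simp only [Finset.mem_union] at this ⊢
  tauto

lemma IsMinRBP.swap (hE : IsMinRBP R B P E) : IsMinRBP B R P E :=
  ⟨hE.1.swap, fun E' hE' => hE.2 E' hE'.swap⟩

lemma IsMinRBP.not_isRBP_erase (hE : IsMinRBP R B P E) {e : Sym2 Pt} (he : e ∈ E) :
    ¬ IsRBP R B P (E.erase e) := fun hE' =>
  (weight_erase_lt he (hE.1.1 e he)).not_ge (hE.2 _ hE')

lemma IsRBP.erase (hE : IsRBP R B P E) {e : Sym2 Pt}
    (hRP : (((graphOf E).deleteEdges {e}).induce (↑(R ∪ P) : Set Pt)).Connected)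
    (hBP : (((graphOf E).deleteEdges {e}).induce (↑(B ∪ P) : Set Pt)).Connected) :
    IsRBP R B P (E.erase e) := by
  obtain ⟨hdiag, hmem, -, -⟩ := hE
  refine ⟨fun e' he' => hdiag e' (Finset.mem_of_mem_erase he'),
    fun e' he' => hmem e' (Finset.mem_of_mem_erase he'), ?_, ?_⟩ <;> rwa [graphOf_erase]

theorem IsMinRBP.isAcyclic_induce_red_purple (hRB : Disjoint R B) (hE : IsMinRBP R B P E) :
    ((graphOf E).induce (↑(R ∪ P) : Set Pt)).IsAcyclic := by
  intro v c hc
  set c₀ := c.map (Embedding.induce _).toHom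
  have hc₀ : c₀.IsCycle := hc.map Subtype.val_injective
  have hc₀RP : ∀ x ∈ c₀.support, x ∈ (↑(R ∪ P) : Set Pt) := by
    simp only [c₀, Walk.support_map, List.mem_map]
    rintro _ ⟨x, -, rfl⟩
    exact x.2
  obtain ⟨e, he, hcases⟩ : ∃ e ∈ c₀.edges,
      (∀ x ∈ c₀.support, x ∈ P) ∨ ∃ x ∈ e, x ∉ (↑(B ∪ P) : Set Pt) := by
    by_cases hP : ∀ x ∈ c₀.support, x ∈ P
    · obtain ⟨e, he, -⟩ :=
        (Walk.mem_support_iff_exists_mem_edges_of_not_nil hc₀.not_nil).mp c₀.start_mem_support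
      exact ⟨e, he, .inl hP⟩
    · push Not at hP
      obtain ⟨x, hx, hxP⟩ := hP
      obtain ⟨e, he, hxe⟩ := (Walk.mem_support_iff_exists_mem_edges_of_not_nil hc₀.not_nil).mp hx
      have hxR : x ∈ R := by simpa [hxP] using hc₀RP x hx
      refine ⟨e, he, .inr ⟨x, hxe, ?_⟩⟩
      simpa [hxP] using Finset.disjoint_left.mp hRB hxR
  refine hE.not_isRBP_erase (mem_of_mem_edgeSet_graphOf (c₀.edges_subset_edgeSet he)) ?_
  obtain ⟨-, -, hconnRP, hconnBP⟩ := hE.1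
  refine hE.1.erase (hconnRP.induce_deleteEdges_of_mem_edges_isCycle hc₀ hc₀RP he) ?_
  rcases hcases with hP | ⟨x, hxe, hx⟩
  · exact hconnBP.induce_deleteEdges_of_mem_edges_isCycle hc₀ (fun x hx => by simp [hP x hx]) he
  · rwa [induce_deleteEdges_singleton_of_notMem hxe hx]

theorem minRBP_induced_subgraphs_are_trees_general (R B P : Finset Pt)
    (hRB : Disjoint R B)
    (E : Finset (Sym2 Pt)) (hE : IsMinRBP R B P E) :
    ((graphOf E).induce (↑(R ∪ P) : Set Pt)).IsTree ∧
    ((graphOf E).induce (↑(B ∪ P) : Set Pt)).IsTree :=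
  ⟨⟨hE.1.2.2.1, hE.isAcyclic_induce_red_purple hRB⟩,
    ⟨hE.1.2.2.2, hE.swap.isAcyclic_induce_red_purple hRB.symm⟩⟩

/-- In a minimum red-blue-purple spanning graph, the subgraph induced
by the red and purple points is a tree, and likewise the subgraph induced by the
blue and purple points is a tree. -/
theorem minRBP_induced_subgraphs_are_trees (R B P : Finset Pt)
    (hRB : Disjoint R B) (hRP : Disjoint R P) (hBP : Disjoint B P)
    (E : Finset (Sym2 Pt)) (hE : IsMinRBP R B P E) :
    ((graphOf E).induce (↑(R ∪ P) : Set Pt)).IsTree ∧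
    ((graphOf E).induce (↑(B ∪ P) : Set Pt)).IsTree :=
  minRBP_induced_subgraphs_are_trees_general R B P hRB E hE
end
end

section
/- For every instance (R,B,P) there exists a minimum red-blue-purple spanning graph in which every vertex has degree at most 15. -/
open scoped Classical

noncomputable section

/-!
Among the minimum RBP graphs take one that also minimises the total abscissa of the edge
endpoints. If `y, y'` are neighbours of `x` lying in the same sets among `R ∪ P` and `B ∪ P`, then
replacing the edge `x y'` by `y y'` gives again an RBP graph, so `|x y'| ≤ |y y'|`, strictly when
`y` lies to the left of `x`. Hence two such neighbours subtend an angle of at least `π / 3` at `x`,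
and more than `π / 3` if one of them lies to the left of `x`; this leaves room for at most five
neighbours of each of the three possible membership types.
-/

open Real Finset

namespace Real

lemma pi_div_three_le_of_cos_le_half {t : ℝ} (ht : 0 ≤ t) (h : cos t ≤ 1 / 2) : π / 3 ≤ t := by
  by_contra! hlt
  have := cos_lt_cos_of_nonneg_of_le_pi ht (by linarith [pi_pos]) hlt
  linarith [cos_pi_div_three]

lemma pi_div_three_lt_of_cos_lt_half {t : ℝ} (ht : 0 ≤ t) (h : cos t < 1 / 2) : π / 3 < t := by
  by_contra! hle
  have := cos_le_cos_of_nonneg_of_le_pi ht (by linarith [pi_pos]) hle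
  linarith [cos_pi_div_three]

lemma le_five_pi_div_three_of_cos_le_half {t : ℝ} (ht : t ≤ 2 * π) (h : cos t ≤ 1 / 2) :
    t ≤ 5 * π / 3 := by
  have := pi_div_three_le_of_cos_le_half (t := 2 * π - t) (by linarith) (by rwa [cos_two_pi_sub])
  linarith

/- Sorted, six such angles have consecutive gaps at least `π / 3` and spread at most `5π / 3`, so
every gap is exactly `π / 3`; hence neither extreme angle has negative cosine, which confines the
spread to `π`. -/
lemma card_le_five_of_cos_sub_le_half (A : Finset ℝ) (hA : ∀ s ∈ A, s ∈ Set.Ioc (-π) π)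
    (hle : ∀ s ∈ A, ∀ t ∈ A, s ≠ t → cos (s - t) ≤ 1 / 2)
    (hlt : ∀ s ∈ A, ∀ t ∈ A, s ≠ t → cos s < 0 → cos (s - t) < 1 / 2) :
    #A ≤ 5 := by
  by_contra! h6
  set φ : Fin 6 → ℝ := fun k => A.orderEmbOfFin rfl (Fin.castLE h6 k)
  have hmem : ∀ k, φ k ∈ A := fun k => A.orderEmbOfFin_mem rfl _
  have hmono : StrictMono φ := (A.orderEmbOfFin rfl).strictMono.comp (Fin.strictMono_castLE h6)
  have hlo : ∀ k, -π < φ k := fun k => (hA _ (hmem k)).1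
  have hhi : ∀ k, φ k ≤ π := fun k => (hA _ (hmem k)).2
  have gap : ∀ k l, k < l → π / 3 ≤ φ l - φ k := fun k l hkl =>
    pi_div_three_le_of_cos_le_half (sub_nonneg.2 (hmono hkl).le)
      (hle _ (hmem l) _ (hmem k) (hmono hkl).ne')
  have span : φ 5 - φ 0 ≤ 5 * π / 3 :=
    le_five_pi_div_three_of_cos_le_half (by linarith [hhi 5, hlo 0])
      (hle _ (hmem 5) _ (hmem 0) (hmono (by decide)).ne')
  have g01 := gap 0 1 (by decide)
  have g12 := gap 1 2 (by decide)
  have g23 := gap 2 3 (by decide)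
  have g34 := gap 3 4 (by decide)
  have g45 := gap 4 5 (by decide)
  have hfirst : 0 ≤ cos (φ 0) := by
    by_contra! hneg
    have := pi_div_three_lt_of_cos_lt_half (t := φ 1 - φ 0) (by linarith [pi_pos])
      (by rw [← cos_neg, neg_sub]; exact hlt _ (hmem 0) _ (hmem 1) (hmono (by decide)).ne hneg)
    linarith
  have hlast : 0 ≤ cos (φ 5) := by
    by_contra! hneg
    have := pi_div_three_lt_of_cos_lt_half (t := φ 5 - φ 4) (by linarith [pi_pos])
      (hlt _ (hmem 5) _ (hmem 4) (hmono (by decide)).ne' hneg)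
    linarith
  have h0 : -(π / 2) ≤ φ 0 := by
    by_contra! h
    have := cos_neg_of_pi_div_two_lt_of_lt (x := -φ 0) (by linarith) (by linarith [hlo 0])
    rw [cos_neg] at this
    linarith
  have h5 : φ 5 ≤ π / 2 := by
    by_contra! h
    have := cos_neg_of_pi_div_two_lt_of_lt h (by linarith [hhi 5, pi_pos])
    linarith
  linarith [pi_pos]

end Real

namespace Complex

lemma norm_sub_sq_eq_sub_cos_arg_sub (z w : ℂ) :
    ‖z - w‖ ^ 2 = ‖z‖ ^ 2 + ‖w‖ ^ 2 - 2 * (‖z‖ * ‖w‖ * Real.cos (z.arg - w.arg)) := by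
  have hinner : ‖z‖ * ‖w‖ * Real.cos (z.arg - w.arg) = z.re * w.re + z.im * w.im := by
    rw [Real.cos_sub, ← norm_mul_cos_arg z, ← norm_mul_sin_arg z,
      ← norm_mul_cos_arg w, ← norm_mul_sin_arg w]
    ring
  rw [hinner, Complex.sq_norm, Complex.sq_norm, Complex.sq_norm, normSq_apply,
    normSq_apply, normSq_apply, sub_re, sub_im]
  ring

lemma cos_arg_sub_le_half {z w : ℂ} (hz : z ≠ 0) (hw : w ≠ 0)
    (hzle : ‖z‖ ≤ ‖z - w‖) (hwle : ‖w‖ ≤ ‖z - w‖) : Real.cos (z.arg - w.arg) ≤ 1 / 2 := by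
  have hlaw := norm_sub_sq_eq_sub_cos_arg_sub z w
  have hz' := norm_pos_iff.2 hz
  have hw' := norm_pos_iff.2 hw
  rcases le_total ‖z‖ ‖w‖ with h | h
  · nlinarith [mul_pos hz' hw', mul_le_mul_of_nonneg_left h hz'.le,
      mul_le_mul hwle hwle hw'.le (norm_nonneg (z - w))]
  · nlinarith [mul_pos hz' hw', mul_le_mul_of_nonneg_left h hw'.le,
      mul_le_mul hzle hzle hz'.le (norm_nonneg (z - w))]

lemma cos_arg_sub_lt_half {z w : ℂ} (hz : z ≠ 0) (hw : w ≠ 0)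
    (hzle : ‖z‖ ≤ ‖z - w‖) (hwlt : ‖w‖ < ‖z - w‖) : Real.cos (z.arg - w.arg) < 1 / 2 := by
  have hlaw := norm_sub_sq_eq_sub_cos_arg_sub z w
  have hz' := norm_pos_iff.2 hz
  have hw' := norm_pos_iff.2 hw
  rcases le_total ‖z‖ ‖w‖ with h | h
  · nlinarith [mul_pos hz' hw', mul_le_mul_of_nonneg_left h hz'.le,
      mul_lt_mul'' hwlt hwlt hw'.le hw'.le]
  · nlinarith [mul_pos hz' hw', mul_le_mul_of_nonneg_left h hw'.le,
      mul_le_mul hzle hzle hz'.le (norm_nonneg (z - w))]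

lemma card_le_five_of_norm_le_norm_sub (W : Finset ℂ) (h0 : (0 : ℂ) ∉ W)
    (hle : ∀ z ∈ W, ∀ w ∈ W, z ≠ w → ‖w‖ ≤ ‖z - w‖)
    (hlt : ∀ z ∈ W, ∀ w ∈ W, z ≠ w → z.re < 0 → ‖w‖ < ‖z - w‖) : #W ≤ 5 := by
  have hne0 : ∀ z ∈ W, z ≠ 0 := fun z hz h => h0 (h ▸ hz)
  have hcos : ∀ z ∈ W, ∀ w ∈ W, z ≠ w → Real.cos (z.arg - w.arg) ≤ 1 / 2 :=
    fun z hz w hw hzw => cos_arg_sub_le_half (hne0 z hz) (hne0 w hw)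
      (norm_sub_rev z w ▸ hle w hw z hz hzw.symm) (hle z hz w hw hzw)
  have hinj : Set.InjOn arg W := by
    intro z hz w hw h
    by_contra hzw
    have := hcos z hz w hw hzw
    rw [h, sub_self, Real.cos_zero] at this
    norm_num at this
  rw [← card_image_of_injOn hinj]
  refine Real.card_le_five_of_cos_sub_le_half _ ?_ ?_ ?_
  · rintro _ hs
    obtain ⟨z, -, rfl⟩ := mem_image.1 hs
    exact ⟨neg_pi_lt_arg z, arg_le_pi z⟩
  · intro s hs t ht hst
    obtain ⟨z, hz, rfl⟩ := mem_image.1 hs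
    obtain ⟨w, hw, rfl⟩ := mem_image.1 ht
    exact hcos z hz w hw (ne_of_apply_ne _ hst)
  · intro s hs t ht hst hneg
    obtain ⟨z, hz, rfl⟩ := mem_image.1 hs
    obtain ⟨w, hw, rfl⟩ := mem_image.1 ht
    have hzw := ne_of_apply_ne _ hst
    have hre : z.re < 0 := by
      rw [← norm_mul_cos_arg z]
      exact mul_neg_of_pos_of_neg (norm_pos_iff.2 (hne0 z hz)) hneg
    exact cos_arg_sub_lt_half (hne0 z hz) (hne0 w hw)
      (norm_sub_rev z w ▸ hle w hw z hz hzw.symm) (hlt z hz w hw hzw hre)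

end Complex

lemma card_le_five_of_dist_le_dist (x : EuclideanSpace ℝ (Fin 2))
    (N : Finset (EuclideanSpace ℝ (Fin 2))) (hx : x ∉ N)
    (hle : ∀ y ∈ N, ∀ y' ∈ N, y ≠ y' → dist x y' ≤ dist y y')
    (hlt : ∀ y ∈ N, ∀ y' ∈ N, y ≠ y' → y 0 < x 0 → dist x y' < dist y y') : #N ≤ 5 := by
  set e := Complex.orthonormalBasisOneI.repr.symm
  set v : EuclideanSpace ℝ (Fin 2) → ℂ := fun y => e (y - x)
  have hv : Function.Injective v := e.injective.comp sub_left_injective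
  have hnorm : ∀ y, ‖v y‖ = dist x y := fun y => by
    rw [dist_comm, dist_eq_norm]; exact e.norm_map _
  have hnorm_sub : ∀ y y', ‖v y - v y'‖ = dist y y' := fun y y' => by
    simp [v, ← map_sub, dist_eq_norm]
  have hre : ∀ y, (v y).re = y 0 - x 0 := fun y => by simp [v, e]
  rw [← card_image_of_injective N hv]
  refine Complex.card_le_five_of_norm_le_norm_sub _ ?_ ?_ ?_
  · rw [mem_image]
    rintro ⟨y, hy, hy0⟩
    exact hx (sub_eq_zero.1 (e.map_eq_zero_iff.1 hy0) ▸ hy)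
  · simp only [forall_mem_image]
    intro y hy y' hy' hne
    rw [hnorm, hnorm_sub]
    exact hle y hy y' hy' (hv.ne_iff.1 hne)
  · simp only [forall_mem_image]
    intro y hy y' hy' hne hneg
    rw [hnorm, hnorm_sub]
    exact hlt y hy y' hy' (hv.ne_iff.1 hne) (by linarith [hre y])

lemma SimpleGraph.Connected.of_adj_reachable_s5 {V : Type*} {G H : SimpleGraph V} (hG : G.Connected)
    (h : ∀ a b, G.Adj a b → H.Reachable a b) : H.Connected := by
  have := hG.nonempty
  refine ⟨fun a b => ?_⟩
  have hab := hG.preconnected a b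
  simp only [SimpleGraph.reachable_eq_reflTransGen] at hab h ⊢
  exact Relation.reflTransGen_closed h _ _ hab

lemma Finset.sum_insert_erase_eq {α M : Type*} [DecidableEq α] [AddCommGroup M] {s : Finset α}
    {a b : α} (f : α → M) (ha : a ∈ s) (hb : b ∉ s.erase a) :
    ∑ e ∈ insert b (s.erase a), f e = ∑ e ∈ s, f e - f a + f b := by
  rw [sum_insert hb, sum_erase_eq_sub ha]
  abel

/-- Ties between minimum RBP graphs are broken by the total abscissa of the edge endpoints. -/
def edgeAbscissa (e : Sym2 Pt) : ℝ :=
  Sym2.lift ⟨fun x y => x 0 + y 0, fun _ _ => add_comm _ _⟩ e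

def abscissaWeight (E : Finset (Sym2 Pt)) : ℝ := ∑ e ∈ E, edgeAbscissa e

def IsLexMinRBP (R B P : Finset Pt) (E : Finset (Sym2 Pt)) : Prop :=
  IsRBP R B P E ∧ ∀ E', IsRBP R B P E' →
    toLex (weight E, abscissaWeight E) ≤ toLex (weight E', abscissaWeight E')

def neighbours (S : Finset Pt) (E : Finset (Sym2 Pt)) (x : Pt) : Finset Pt :=
  S.filter fun z => s(x, z) ∈ E

def colourType (R B P : Finset Pt) (z : Pt) : Bool × Bool :=
  (decide (z ∈ R ∪ P), decide (z ∈ B ∪ P))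

section

variable {R B P : Finset Pt} {E : Finset (Sym2 Pt)}

lemma IsRBP.ne_of_mem (hE : IsRBP R B P E) {x y : Pt} (h : s(x, y) ∈ E) : x ≠ y :=
  fun hxy => hE.1 _ h (Sym2.mk_isDiag_iff.2 hxy)

lemma IsRBP.subset_sym2 (hE : IsRBP R B P E) : E ⊆ (R ∪ B ∪ P).sym2 :=
  fun e he => mem_sym2_iff.2 (hE.2.1 e he)

lemma IsRBP.card_incident_le (hE : IsRBP R B P E) (x : Pt) :
    #(E.filter (x ∈ ·)) ≤ #(neighbours (R ∪ B ∪ P) E x) := by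
  refine (card_le_card fun e he => ?_).trans (card_image_le (f := fun z => s(x, z)))
  obtain ⟨heE, hxe⟩ := mem_filter.1 he
  have hother := Sym2.other_spec hxe
  exact mem_image.2 ⟨_, mem_filter.2 ⟨hE.2.1 e heE _ (Sym2.other_mem hxe), by rwa [hother]⟩, hother⟩

lemma connected_induce_insert_erase {T : Set Pt} {x y y' : Pt}
    (hc : ((graphOf E).induce T).Connected) (hxy : s(x, y) ∈ E) (hxy_ne : x ≠ y) (hyy' : y ≠ y')
    (hyT : y' ∈ T → y ∈ T) :
    ((graphOf (insert s(y, y') (E.erase s(x, y')))).induce T).Connected := by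
  set F := insert s(y, y') (E.erase s(x, y'))
  have hF : ∀ e ∈ E, e ≠ s(x, y') → e ∈ F :=
    fun e he hne => mem_insert_of_mem (mem_erase.2 ⟨hne, he⟩)
  refine hc.of_adj_reachable_s5 fun ⟨a, ha⟩ ⟨b, hb⟩ ⟨hab, habE⟩ => ?_
  by_cases he : s(a, b) = s(x, y')
  · have hadj : ∀ {p q : T}, (p : Pt) ≠ q → s((p : Pt), q) ∈ F →
        ((graphOf F).induce T).Reachable p q :=
      fun hpq hpqF => SimpleGraph.Adj.reachable ⟨hpq, hpqF⟩
    have hdetour : ∀ (hxT : x ∈ T) (hy'T : y' ∈ T),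
        ((graphOf F).induce T).Reachable ⟨x, hxT⟩ ⟨y', hy'T⟩ := fun hxT hy'T =>
      (hadj (q := ⟨y, hyT hy'T⟩) hxy_ne (hF _ hxy (mt Sym2.congr_right.1 hyy'))).trans
        (hadj hyy' (mem_insert_self _ _))
    rcases Sym2.eq_iff.1 he with ⟨rfl, rfl⟩ | ⟨rfl, rfl⟩
    · exact hdetour ha hb
    · exact (hdetour hb ha).symm
  · exact SimpleGraph.Adj.reachable ⟨hab, hF _ habE he⟩

lemma IsRBP.insert_erase (hE : IsRBP R B P E) {x y y' : Pt} (hxy : s(x, y) ∈ E)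
    (hxy' : s(x, y') ∈ E) (hyy' : y ≠ y') (hRP : y' ∈ R ∪ P → y ∈ R ∪ P)
    (hBP : y' ∈ B ∪ P → y ∈ B ∪ P) :
    IsRBP R B P (insert s(y, y') (E.erase s(x, y'))) := by
  refine ⟨?_, ?_, connected_induce_insert_erase hE.2.2.1 hxy (hE.ne_of_mem hxy) hyy' hRP,
    connected_induce_insert_erase hE.2.2.2 hxy (hE.ne_of_mem hxy) hyy' hBP⟩
  · simp only [forall_mem_insert, Sym2.mk_isDiag_iff]
    exact ⟨hyy', fun e he => hE.1 e (mem_of_mem_erase he)⟩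
  · simp only [forall_mem_insert, Sym2.mem_iff, forall_eq_or_imp, forall_eq]
    exact ⟨⟨hE.2.1 _ hxy y (Sym2.mem_mk_right _ _), hE.2.1 _ hxy' y' (Sym2.mem_mk_right _ _)⟩,
      fun e he => hE.2.1 e (mem_of_mem_erase he)⟩

lemma exists_isLexMinRBP (hex : ∃ E₀, IsRBP R B P E₀) : ∃ E, IsLexMinRBP R B P E := by
  obtain ⟨E₀, hE₀⟩ := hex
  set C := (R ∪ B ∪ P).sym2.powerset.filter (IsRBP R B P)
  obtain ⟨E, hEC, hmin⟩ := C.exists_min_image (fun E => toLex (weight E, abscissaWeight E))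
    ⟨E₀, mem_filter.2 ⟨mem_powerset.2 hE₀.subset_sym2, hE₀⟩⟩
  exact ⟨E, (mem_filter.1 hEC).2,
    fun E' hE' => hmin E' (mem_filter.2 ⟨mem_powerset.2 hE'.subset_sym2, hE'⟩)⟩

lemma IsLexMinRBP.isMinRBP (hE : IsLexMinRBP R B P E) : IsMinRBP R B P E :=
  ⟨hE.1, fun E' hE' => (Prod.Lex.toLex_le_toLex'.1 (hE.2 E' hE')).1⟩

lemma IsLexMinRBP.dist_le_dist (hE : IsLexMinRBP R B P E) {x y y' : Pt} (hxy : s(x, y) ∈ E)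
    (hxy' : s(x, y') ∈ E) (hyy' : y ≠ y') (hRP : y' ∈ R ∪ P → y ∈ R ∪ P)
    (hBP : y' ∈ B ∪ P → y ∈ B ∪ P) :
    dist x y' ≤ dist y y' ∧ (y 0 < x 0 → dist x y' < dist y y') := by
  have hmin := Prod.Lex.toLex_le_toLex'.1 (hE.2 _ (hE.1.insert_erase hxy hxy' hyy' hRP hBP))
  have hpos : 0 < dist x y' := dist_pos.2 (hE.1.ne_of_mem hxy')
  by_cases hmem : s(y, y') ∈ E
  · have hmem' : s(y, y') ∈ E.erase s(x, y') :=
      mem_erase.2 ⟨mt Sym2.congr_left.1 (hE.1.ne_of_mem hxy).symm, hmem⟩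
    have hw : weight (E.erase s(x, y')) = weight E - dist x y' := sum_erase_eq_sub hxy'
    rw [insert_eq_of_mem hmem', hw] at hmin
    linarith [hmin.1]
  · have hnot : s(y, y') ∉ E.erase s(x, y') := fun h => hmem (mem_of_mem_erase h)
    have hw : weight (insert s(y, y') (E.erase s(x, y'))) = weight E - dist x y' + dist y y' :=
      sum_insert_erase_eq edgeLen hxy' hnot
    have ha : abscissaWeight (insert s(y, y') (E.erase s(x, y'))) =
        abscissaWeight E - (x 0 + y' 0) + (y 0 + y' 0) :=
      sum_insert_erase_eq edgeAbscissa hxy' hnot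
    rw [hw, ha] at hmin
    refine ⟨by linarith [hmin.1], fun hleft => ?_⟩
    by_contra! hle
    linarith [hmin.2 (by linarith [hmin.1])]

lemma mem_of_colourType_eq {y y' : Pt} (h : colourType R B P y' = colourType R B P y) :
    (y' ∈ R ∪ P → y ∈ R ∪ P) ∧ (y' ∈ B ∪ P → y ∈ B ∪ P) := by
  simp only [colourType, Prod.mk.injEq, decide_eq_decide] at h
  exact ⟨h.1.mp, h.2.mp⟩

lemma IsLexMinRBP.card_neighbours_colourType_le_five (hE : IsLexMinRBP R B P E) (x : Pt)
    (t : Bool × Bool) :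
    #((neighbours (R ∪ B ∪ P) E x).filter (colourType R B P · = t)) ≤ 5 := by
  set M := (neighbours (R ∪ B ∪ P) E x).filter (colourType R B P · = t)
  have hmem : ∀ y ∈ M, s(x, y) ∈ E ∧ colourType R B P y = t := fun y hy =>
    ⟨(mem_filter.1 (mem_filter.1 hy).1).2, (mem_filter.1 hy).2⟩
  have hexchange : ∀ y ∈ M, ∀ y' ∈ M, y ≠ y' →
      dist x y' ≤ dist y y' ∧ (y 0 < x 0 → dist x y' < dist y y') := by
    intro y hy y' hy' hyy'
    obtain ⟨hxy, hyt⟩ := hmem y hy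
    obtain ⟨hxy', hy't⟩ := hmem y' hy'
    have hcol := mem_of_colourType_eq (hy't.trans hyt.symm)
    exact hE.dist_le_dist hxy hxy' hyy' hcol.1 hcol.2
  exact card_le_five_of_dist_le_dist x M (fun hx => hE.1.ne_of_mem (hmem x hx).1 rfl)
    (fun y hy y' hy' hyy' => (hexchange y hy y' hy' hyy').1)
    (fun y hy y' hy' hyy' => (hexchange y hy y' hy' hyy').2)

lemma IsLexMinRBP.card_neighbours_le_fifteen (hE : IsLexMinRBP R B P E) (x : Pt) :
    #(neighbours (R ∪ B ∪ P) E x) ≤ 15 := by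
  have himage : (neighbours (R ∪ B ∪ P) E x).image (colourType R B P) ⊆
      {(true, true), (true, false), (false, true)} := by
    intro t ht
    obtain ⟨z, hz, rfl⟩ := mem_image.1 ht
    have hz' := (mem_filter.1 hz).1
    simp only [mem_union] at hz'
    simp only [colourType, mem_union, mem_insert, mem_singleton, Prod.mk.injEq, decide_eq_true_eq,
      decide_eq_false_iff_not]
    tauto
  calc #(neighbours (R ∪ B ∪ P) E x)
      ≤ 5 * #((neighbours (R ∪ B ∪ P) E x).image (colourType R B P)) :=
        card_le_mul_card_image _ 5 fun t _ => hE.card_neighbours_colourType_le_five x t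
    _ ≤ 5 * 3 := Nat.mul_le_mul_left 5 ((card_le_card himage).trans card_le_three)

end

theorem exists_minRBP_max_degree_15_general (R B P : Finset Pt)
    (hex : ∃ E₀ : Finset (Sym2 Pt), IsRBP R B P E₀) :
    ∃ E : Finset (Sym2 Pt), IsMinRBP R B P E ∧
      ∀ x : Pt, (E.filter (fun e => x ∈ e)).card ≤ 15 := by
  obtain ⟨E, hE⟩ := exists_isLexMinRBP hex
  exact ⟨E, hE.isMinRBP, fun x => (hE.1.card_incident_le x).trans (hE.card_neighbours_le_fifteen x)⟩

/-- for every instance `(R, B, P)` (admitting an RBP spanning graph)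
there exists a minimum red-blue-purple spanning graph in which every vertex has
degree at most 15. -/
theorem exists_minRBP_max_degree_15 (R B P : Finset Pt)
    (hRB : Disjoint R B) (hRP : Disjoint R P) (hBP : Disjoint B P)
    (hex : ∃ E₀ : Finset (Sym2 Pt), IsRBP R B P E₀) :
    ∃ E : Finset (Sym2 Pt), IsMinRBP R B P E ∧
      ∀ x : Pt, (E.filter (fun e => x ∈ e)).card ≤ 15 :=
  exists_minRBP_max_degree_15_general R B P hex
end
end
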